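/- arXiv:1605.07753 — 4 statements merged into one kernel-verified Lean document; each statement's English description precedes it below -/
import Mathlib

section
/- In a finite monoid, if U ≤_R V (i.e. UM ⊆ VM) and U J V (i.e. MUM = MVM), then U R V (i.e. UM = VM). -/
lemma exists_idempotent_pow {M : Type*} [Monoid M] [Finite M] (x : M) :
    ∃ k : ℕ, 0 < k ∧ x ^ k * x ^ k = x ^ k := by
  obtain ⟨i, j, hij, hx⟩ := Finite.exists_ne_map_eq_of_infinite (fun n : ℕ => x ^ n)
  wlog h : i < j generalizing i j
  · exact this j i hij.symm hx.symm (by omega)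
  set d := j - i with hd
  have hd0 : 0 < d := by omega
  have step : ∀ n, i ≤ n → x ^ (n + d) = x ^ n := by
    intro n hn
    have : x ^ (n + d) = x ^ (n - i) * x ^ (i + d) := by
      rw [← pow_add]; congr 1; omega
    rw [this]
    have : x ^ (i + d) = x ^ i := by
      have : i + d = j := by omega
      rw [this, hx]
    rw [this, ← pow_add]
    congr 1; omega
  have mult : ∀ m n, i ≤ n → x ^ (n + m * d) = x ^ n := by
    intro m
    induction m with
    | zero => simp
    | succ m ih =>
      intro n hn
      have : n + (m + 1) * d = (n + d) + m * d := by ring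
      rw [this, ih (n + d) (by omega), step n hn]
  refine ⟨(i + 1) * d, by positivity, ?_⟩
  rw [← pow_add]
  exact mult (i + 1) ((i + 1) * d) (by nlinarith)

theorem leR_and_J_implies_R {M : Type*} [Monoid M] [Finite M] (U V : M)
    (hle : {x : M | ∃ m : M, x = U * m} ⊆ {x : M | ∃ m : M, x = V * m})
    (hJ : {x : M | ∃ m m' : M, x = m * U * m'} = {x : M | ∃ m m' : M, x = m * V * m'}) :
    {x : M | ∃ m : M, x = U * m} = {x : M | ∃ m : M, x = V * m} := by
  apply Set.Subset.antisymm hle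
  -- U = V * a
  obtain ⟨a, ha⟩ : U ∈ {x : M | ∃ m : M, x = V * m} := hle ⟨1, (mul_one U).symm⟩
  -- V = p * U * q
  obtain ⟨p, q, hpq⟩ : V ∈ {x : M | ∃ m m' : M, x = m * U * m'} := by
    rw [hJ]; exact ⟨1, 1, by simp⟩
  have hV : V = p * V * (a * q) := by
    conv_lhs => rw [hpq, ha]
    simp [mul_assoc]
  have iter : ∀ n : ℕ, V = p ^ n * V * (a * q) ^ n := by
    intro n
    induction n with
    | zero => simp
    | succ n ih =>
      calc V = p ^ n * V * (a * q) ^ n := ih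
        _ = p ^ n * (p * V * (a * q)) * (a * q) ^ n := by rw [← hV]
        _ = p ^ (n + 1) * V * (a * q) ^ (n + 1) := by
            rw [pow_succ, pow_succ']; simp [mul_assoc]
  obtain ⟨k, hk, he⟩ := exists_idempotent_pow (a * q)
  have hVe : V = V * (a * q) ^ k := by
    conv_lhs => rw [iter k]
    conv_rhs => rw [iter k]
    simp only [mul_assoc]
    rw [he]
  rintro x ⟨m, rfl⟩
  refine ⟨q * (a * q) ^ (k - 1) * m, ?_⟩
  have : V * (a * q) ^ k = U * (q * (a * q) ^ (k - 1)) := by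
    rw [ha]
    have : (a * q) ^ k = a * (q * (a * q) ^ (k - 1)) := by
      conv_lhs => rw [show k = 1 + (k - 1) by omega, pow_add, pow_one, mul_assoc]
    rw [this, mul_assoc]
  conv_lhs => rw [hVe, this]
  simp [mul_assoc]
end

section
/- Let U be an idempotent Boolean matrix on a finite set S. Then (U#)# = U#, i.e. the iteration operation on idempotent Boolean matrices is itself idempotent. -/
def bmul {S : Type*} [Fintype S] (U V : S → S → Bool) : S → S → Bool :=
  fun s t => decide (∃ s', U s s' = true ∧ V s' t = true)

def recurrent {S : Type*} (U : S → S → Bool) (t : S) : Prop :=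
  ∀ t', U t t' = true → U t' t = true

instance {S : Type*} [Fintype S] (U : S → S → Bool) (t : S) :
    Decidable (recurrent U t) :=
  inferInstanceAs (Decidable (∀ t', U t t' = true → U t' t = true))

def sharp {S : Type*} [Fintype S] (U : S → S → Bool) : S → S → Bool :=
  fun s t => U s t && decide (recurrent U t)

theorem sharp_sharp {S : Type*} [Fintype S]
    (U : S → S → Bool) (hU : bmul U U = U) :
    sharp (sharp U) = sharp U := by
  funext s t
  simp only [sharp, Bool.and_eq_true, decide_eq_true_eq]
  by_cases h : U s t = true ∧ recurrent U t
  · obtain ⟨hst, hrec⟩ := h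
    have hrec' : recurrent (sharp U) t := by
      intro t' ht'
      simp only [sharp, Bool.and_eq_true, decide_eq_true_eq] at ht' ⊢
      exact ⟨hrec t' ht'.1, hrec⟩
    simp [sharp, hst, hrec, hrec']
  · have : (U s t && decide (recurrent U t)) = false := by
      rcases not_and_or.mp h with h1 | h1
      · simp [Bool.eq_false_iff.mpr h1]
      · simp [h1]
    simp [this]
end

section
/- Let U be an idempotent Boolean matrix on a finite set S such that every row of U is nonempty (for each s there exists t with U(s,t) = true). Then for every state s there exists a U-recurrent state t with U(s,t) = true; consequently every row of U# is nonempty. -/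
theorem exists_recurrent_successor {S : Type*} [Fintype S]
    (U : S → S → Bool) (hU : bmul U U = U)
    (hrow : ∀ s : S, ∃ t : S, U s t = true) :
    ∀ s : S, ∃ t : S, recurrent U t ∧ U s t = true ∧ sharp U s t = true := by
  have trans : ∀ a b c : S, U a b = true → U b c = true → U a c = true := by
    intro a b c hab hbc
    have h := congrFun (congrFun hU a) c
    rw [← h]
    simp only [bmul, decide_eq_true_eq]
    exact ⟨b, hab, hbc⟩
  intro s
  set succ : S → Finset S := fun t => Finset.univ.filter (fun x => U t x = true) with hsucc
  have mem_succ : ∀ t x : S, x ∈ succ t ↔ U t x = true := by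
    intro t x; simp [hsucc]
  have succ_sub : ∀ t x : S, U t x = true → succ x ⊆ succ t := by
    intro t x htx y hy
    rw [mem_succ] at *
    exact trans t x y htx hy
  set T : Finset S := Finset.univ.filter (fun t => U s t = true) with hT
  have hTne : T.Nonempty := by
    obtain ⟨t, ht⟩ := hrow s
    exact ⟨t, by simp [hT, ht]⟩
  obtain ⟨t₀, ht₀T, hmin⟩ := T.exists_min_image (fun t => (succ t).card) hTne
  have ht₀ : U s t₀ = true := by simpa [hT] using ht₀T
  have key : ∀ x : S, U t₀ x = true → succ x = succ t₀ := by
    intro x hx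
    have hxT : x ∈ T := by simp [hT, trans s t₀ x ht₀ hx]
    have hsub := succ_sub t₀ x hx
    exact Finset.eq_of_subset_of_card_le hsub (hmin x hxT)
  obtain ⟨t', ht'⟩ := hrow t₀
  have hrec : recurrent U t' := by
    intro y hy
    -- y ∈ succ t' = succ t₀
    have hy0 : U t₀ y = true := by
      have := key t' ht'
      have : y ∈ succ t₀ := by rw [← this]; rw [mem_succ]; exact hy
      rwa [mem_succ] at this
    have h2 := key y hy0
    have : t' ∈ succ y := by rw [h2, mem_succ]; exact ht'
    rwa [mem_succ] at this
  have hst' : U s t' = true := trans s t₀ t' ht₀ ht'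
  exact ⟨t', hrec, hst', by simp [sharp, hst', hrec]⟩
end

section
/- Let A be a stochastic m×m matrix and B a stochastic m×m matrix, i an index, and J a set of indices. There do NOT exist such A, B, i, J with the property that for all n ≥ 0, the sum over j ∈ J of (AⁿB)_{i,j} equals (1/2)·1/(1 − 1/2^{n+1}). -/
/-!
By Cayley–Hamilton, every sequence `n ↦ L (Aⁿ B)` with `L` linear is annihilated by the
characteristic polynomial `p` of `A`: `∑ₖ pₖ u (n + k) = 0` for all `n`. The target sequence
`u n = a / (1 - r ^ (n + 1))` (here `a = r = 1/2`) tends to `a` and satisfies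
`u n - a = r ^ (n + 1) * u n`. So every coefficient vector `c` annihilating `u` has
`∑ₖ cₖ = 0`, and then `(cₖ rᵏ)ₖ` annihilates `u` as well. Iterating gives `p (rᵗ) = 0` for
every `t`: infinitely many roots, which is impossible for the monic `p`.
-/

def IsStochastic {m : ℕ} (A : Matrix (Fin m) (Fin m) ℝ) : Prop :=
  (∀ i j, 0 ≤ A i j) ∧ ∀ i, ∑ j, A i j = 1

open Finset Polynomial Filter Topology

def Annihilates {R : Type*} [Semiring R] (c : ℕ → R) (M : ℕ) (u : ℕ → R) : Prop :=
  ∀ n, ∑ k ∈ range M, c k * u (n + k) = 0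

theorem annihilates_coeff_of_aeval_eq_zero {R 𝒜 : Type*} [CommRing R] [Ring 𝒜] [Algebra R 𝒜]
    {p : R[X]} {a : 𝒜} (hp : aeval a p = 0) (L : 𝒜 →ₗ[R] R) (b : 𝒜) :
    Annihilates p.coeff (p.natDegree + 1) fun n => L (a ^ n * b) := by
  intro n
  have hexpand : a ^ n * aeval a p * b =
      ∑ k ∈ range (p.natDegree + 1), p.coeff k • (a ^ (n + k) * b) := by
    rw [aeval_eq_sum_range, mul_sum, sum_mul]
    refine sum_congr rfl fun k _ => ?_
    rw [mul_smul_comm, smul_mul_assoc, pow_add]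
  have := congrArg L hexpand
  simpa only [hp, mul_zero, zero_mul, map_zero, map_sum, map_smul, smul_eq_mul, eq_comm]
    using this

section DivOneSubPow

variable {a r : ℝ}

theorem tendsto_div_one_sub_pow (hr : |r| < 1) :
    Tendsto (fun n : ℕ => a / (1 - r ^ (n + 1))) atTop (𝓝 a) := by
  have hpow : Tendsto (fun n : ℕ => r ^ (n + 1)) atTop (𝓝 0) :=
    (tendsto_pow_atTop_nhds_zero_of_abs_lt_one hr).comp (tendsto_add_atTop_nat 1)
  have := tendsto_const_nhds (x := a).div (tendsto_const_nhds.sub hpow)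
    (by norm_num : (1 : ℝ) - 0 ≠ 0)
  rwa [sub_zero, div_one] at this

theorem div_one_sub_pow_sub (hr : |r| < 1) (n : ℕ) :
    a / (1 - r ^ (n + 1)) - a = r ^ (n + 1) * (a / (1 - r ^ (n + 1))) := by
  have hlt : |r ^ (n + 1)| < 1 := by
    rw [abs_pow]
    exact pow_lt_one₀ (abs_nonneg r) hr (Nat.succ_ne_zero n)
  have hne : 1 - r ^ (n + 1) ≠ 0 := by
    intro h
    rw [← sub_eq_zero.mp h, abs_one] at hlt
    exact lt_irrefl 1 hlt
  field_simp
  ring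

variable {c : ℕ → ℝ} {M : ℕ}

theorem Annihilates.sum_eq_zero_of_div_one_sub_pow (ha : a ≠ 0) (hr : |r| < 1)
    (h : Annihilates c M fun n => a / (1 - r ^ (n + 1))) :
    ∑ k ∈ range M, c k = 0 := by
  have hlim : Tendsto (fun n => ∑ k ∈ range M, c k * (a / (1 - r ^ (n + k + 1)))) atTop
      (𝓝 (∑ k ∈ range M, c k * a)) :=
    tendsto_finsetSum _ fun k _ =>
      ((tendsto_div_one_sub_pow hr).comp (tendsto_add_atTop_nat k)).const_mul (c k)
  have hzero : ∑ k ∈ range M, c k * a = 0 :=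
    tendsto_nhds_unique hlim (by simp only [h _, tendsto_const_nhds])
  rw [← sum_mul] at hzero
  exact (mul_eq_zero.mp hzero).resolve_right ha

theorem Annihilates.mul_pow_of_div_one_sub_pow (ha : a ≠ 0) (hr0 : r ≠ 0) (hr : |r| < 1)
    (h : Annihilates c M fun n => a / (1 - r ^ (n + 1))) :
    Annihilates (fun k => c k * r ^ k) M fun n => a / (1 - r ^ (n + 1)) := by
  intro n
  have hshift : r ^ (n + 1) * ∑ k ∈ range M, c k * r ^ k * (a / (1 - r ^ (n + k + 1))) =
      ∑ k ∈ range M, c k * (a / (1 - r ^ (n + k + 1))) - a * ∑ k ∈ range M, c k := by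
    rw [mul_sum, mul_sum, ← sum_sub_distrib]
    refine sum_congr rfl fun k _ => ?_
    have := div_one_sub_pow_sub (a := a) hr (n + k)
    rw [pow_add r (n + k), pow_add r n] at this ⊢
    linear_combination (-c k) * this
  rw [h n, h.sum_eq_zero_of_div_one_sub_pow ha hr, mul_zero, sub_zero] at hshift
  exact (mul_eq_zero.mp hshift).resolve_left (pow_ne_zero _ hr0)

theorem Annihilates.sum_mul_pow_pow_eq_zero_of_div_one_sub_pow (ha : a ≠ 0) (hr0 : r ≠ 0)
    (hr : |r| < 1) (h : Annihilates c M fun n => a / (1 - r ^ (n + 1))) (t : ℕ) :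
    ∑ k ∈ range M, c k * (r ^ t) ^ k = 0 := by
  induction t generalizing c with
  | zero => simpa using h.sum_eq_zero_of_div_one_sub_pow ha hr
  | succ t ih =>
    simpa only [mul_assoc, ← mul_pow, ← pow_succ'] using
      ih (h.mul_pow_of_div_one_sub_pow ha hr0 hr)

end DivOneSubPow

theorem Polynomial.eq_zero_of_forall_isRoot_pow {r : ℝ} (hr0 : r ≠ 0) (hr : |r| < 1)
    {p : ℝ[X]} (h : ∀ t : ℕ, p.IsRoot (r ^ t)) : p = 0 := by
  have hinj : Function.Injective fun t : ℕ => r ^ t := fun s t hst =>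
    (pow_right_strictAnti₀ (abs_pos.mpr hr0) hr).injective <| by
      simpa only [abs_pow] using congrArg abs hst
  exact p.eq_zero_of_infinite_isRoot (Set.infinite_of_injective_forall_mem hinj h)

theorem Polynomial.eq_zero_of_annihilates_div_one_sub_pow {a r : ℝ} (ha : a ≠ 0) (hr0 : r ≠ 0)
    (hr : |r| < 1) {p : ℝ[X]}
    (h : Annihilates p.coeff (p.natDegree + 1) fun n => a / (1 - r ^ (n + 1))) : p = 0 :=
  eq_zero_of_forall_isRoot_pow hr0 hr fun t => by
    rw [IsRoot.def, eval_eq_sum_range]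
    exact h.sum_mul_pow_pow_eq_zero_of_div_one_sub_pow ha hr0 hr t

theorem no_finite_memory_optimal_strategy :
    ¬ ∃ (m : ℕ) (A B : Matrix (Fin m) (Fin m) ℝ) (i : Fin m) (J : Finset (Fin m)),
      IsStochastic A ∧ IsStochastic B ∧
      ∀ n : ℕ, ∑ j ∈ J, (A ^ n * B) i j =
        (1 / 2) * (1 / (1 - 1 / 2 ^ (n + 1))) := by
  rintro ⟨m, A, B, i, J, -, -, hAB⟩
  let L : Matrix (Fin m) (Fin m) ℝ →ₗ[ℝ] ℝ := ∑ j ∈ J, Matrix.entryLinearMap ℝ ℝ i j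
  have hL : (fun n => L (A ^ n * B)) = fun n => 1 / 2 / (1 - (1 / 2) ^ (n + 1)) := by
    ext n
    simp only [L, LinearMap.sum_apply, Matrix.entryLinearMap_apply, hAB n, one_div_pow,
      mul_one_div]
  have hcharpoly := annihilates_coeff_of_aeval_eq_zero A.aeval_self_charpoly L B
  rw [hL] at hcharpoly
  exact A.charpoly_monic.ne_zero <| eq_zero_of_annihilates_div_one_sub_pow
    (by norm_num) (by norm_num) (by norm_num [abs_of_pos]) hcharpoly
end
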